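/- arXiv:1809.05045 — 2 statements merged into one kernel-verified Lean document; each statement's English description precedes it below -/
import Mathlib

section
/- Let Y be a real locally convex space, f : Y → (−∞, +∞] a function whose sublevel sets {y : f(y) ≤ α} are compact for every α ∈ ℝ (coercive), and M ⊆ Y a closed linear subspace. Define f̃ on the quotient Y/M by f̃(y + M) = inf_{v ∈ M} f(y + v). Then every sublevel set {u ∈ Y/M : f̃(u) ≤ α} is compact in the quotient topology; in fact S⁻(f̃, α) = ⋂_{ε>0} π_M(S⁻(f, α+ε)) where π_M is the quotient map. -/
/-! Compactness of `S⁻(f̃, α)` comes from writing it as `⋂_{ε>0} π_M(S⁻(f, α+ε))`: each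
`π_M(S⁻(f, α+ε))` is the continuous image of a compact set, hence compact, and closed because
the quotient by a closed subspace is Hausdorff. -/

open Submodule

/-- The induced functional on the quotient `Y ⧸ M`: `f̃(y + M) = inf_{v ∈ M} f(y + v)`,
written as the infimum of `f` over the coset. -/
noncomputable def quotInf {Y : Type*} [AddCommGroup Y] [Module ℝ Y]
    (M : Submodule ℝ Y) (f : Y → EReal) (u : Y ⧸ M) : EReal :=
  ⨅ (y : Y) (_ : (Submodule.Quotient.mk y : Y ⧸ M) = u), f y

theorem IsCompact.biInter_of_mem {X ι : Type*} [TopologicalSpace X] [T2Space X]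
    {K : ι → Set X} {s : Set ι} (hK : ∀ i ∈ s, IsCompact (K i)) {i₀ : ι} (hi₀ : i₀ ∈ s) :
    IsCompact (⋂ i ∈ s, K i) :=
  (hK i₀ hi₀).of_isClosed_subset (isClosed_biInter fun i hi => (hK i hi).isClosed)
    (Set.biInter_subset_of_mem hi₀)

section quotInf

variable {Y : Type*} [AddCommGroup Y] [Module ℝ Y] (M : Submodule ℝ Y) (f : Y → EReal)

theorem quotInf_lt_iff {u : Y ⧸ M} {c : EReal} :
    quotInf M f u < c ↔ ∃ y, M.mkQ y = u ∧ f y < c := by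
  simp only [quotInf, iInf_lt_iff, exists_prop, mkQ_apply]

theorem quotInf_mkQ_le (y : Y) : quotInf M f (M.mkQ y) ≤ f y :=
  iInf₂_le (f := fun y' (_ : Submodule.Quotient.mk y' = M.mkQ y) => f y') y rfl

theorem setOf_quotInf_le_eq_iInter_image (α : ℝ) :
    {u : Y ⧸ M | quotInf M f u ≤ (α : EReal)} =
      ⋂ ε ∈ Set.Ioi (0 : ℝ), M.mkQ '' {y : Y | f y ≤ ((α + ε : ℝ) : EReal)} := by
  ext u
  simp only [Set.mem_ofPred_eq, Set.mem_iInter, Set.mem_image, Set.mem_Ioi]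
  constructor
  · intro hu ε hε
    have hlt : quotInf M f u < ((α + ε : ℝ) : EReal) :=
      hu.trans_lt (EReal.coe_lt_coe_iff.mpr (lt_add_of_pos_right α hε))
    obtain ⟨y, rfl, hy⟩ := (quotInf_lt_iff M f).mp hlt
    exact ⟨y, hy.le, rfl⟩
  · intro hu
    refine EReal.le_of_forall_lt_iff_le.mp fun c hc => ?_
    obtain ⟨y, hy, rfl⟩ := hu (c - α) (sub_pos.mpr (EReal.coe_lt_coe_iff.mp hc))
    calc quotInf M f (M.mkQ y) ≤ f y := quotInf_mkQ_le M f y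
      _ ≤ c := by rwa [add_sub_cancel] at hy

end quotInf

theorem quotInf_sublevel_compact_general
    {Y : Type*} [AddCommGroup Y] [Module ℝ Y] [TopologicalSpace Y]
    [IsTopologicalAddGroup Y]
    (f : Y → EReal)
    (hcoer : ∀ α : ℝ, IsCompact {y : Y | f y ≤ (α : EReal)})
    (M : Submodule ℝ Y) (hM : IsClosed (M : Set Y)) (α : ℝ) :
    IsCompact {u : Y ⧸ M | quotInf M f u ≤ (α : EReal)} ∧
      {u : Y ⧸ M | quotInf M f u ≤ (α : EReal)} =
        ⋂ ε ∈ Set.Ioi (0 : ℝ), M.mkQ '' {y : Y | f y ≤ ((α + ε : ℝ) : EReal)} := by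
  have hsublevel := setOf_quotInf_le_eq_iInter_image M f α
  refine ⟨?_, hsublevel⟩
  have : IsClosed (M : Set Y) := hM
  rw [hsublevel]
  exact IsCompact.biInter_of_mem (fun ε _ => (hcoer (α + ε)).image M.continuous_mkQ)
    (Set.mem_Ioi.mpr one_pos)

/-- If `Y` is a real locally convex space, `f : Y → (−∞, +∞]` has compact
sublevel sets (coercive), and `M` is a closed subspace, then every sublevel set of the induced
functional `f̃` on `Y ⧸ M` is compact in the quotient topology; in fact
`S⁻(f̃, α) = ⋂_{ε>0} π_M(S⁻(f, α+ε))`. -/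
theorem quotInf_sublevel_compact
    {Y : Type*} [AddCommGroup Y] [Module ℝ Y] [TopologicalSpace Y]
    [IsTopologicalAddGroup Y] [ContinuousSMul ℝ Y] [LocallyConvexSpace ℝ Y]
    (f : Y → EReal) (hbot : ∀ y, f y ≠ ⊥)
    (hcoer : ∀ α : ℝ, IsCompact {y : Y | f y ≤ (α : EReal)})
    (M : Submodule ℝ Y) (hM : IsClosed (M : Set Y)) (α : ℝ) :
    IsCompact {u : Y ⧸ M | quotInf M f u ≤ (α : EReal)} ∧
      {u : Y ⧸ M | quotInf M f u ≤ (α : EReal)} =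
        ⋂ ε ∈ Set.Ioi (0 : ℝ), M.mkQ '' {y : Y | f y ≤ ((α + ε : ℝ) : EReal)} :=
  quotInf_sublevel_compact_general f hcoer M hM α
end

section
/- Let L be a nonzero constant-coefficient differential operator with fundamental solution G, Ω ⊂ ℝ^d bounded open, and T_Ω : M(Ω) → C₀^s(Ω)* the operator μ ↦ (μ̃ ⋆ G)|_Ω (for suitable s depending on the order of G on bounded sets). Then the composition π_N ∘ T_Ω : M(Ω) → X/N is injective, where X = C₀^s(Ω)*, N = {ψ ∈ X : Lψ = 0}, and π_N is the quotient map. Consequently, the extremal points of the unit ball B_N = {u_N : ‖Lu_N‖_M ≤ 1} of the seminorm ‖L·‖_M in X/N are exactly (π_N ∘ T_Ω)(±δ_x), x ∈ Ω, i.e. the classes of ±G_x where G_x is the translate of G by x. -/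
/-!
Since `L (T μ) = j μ` with `j` injective, two measures with the same class modulo `ker L` coincide,
and every class in `B_N` is the class of some `T μ` with `‖μ‖_M ≤ 1`. So `π_N ∘ T` is an injective
linear map carrying the total variation unit ball of `M(Ω)` onto `B_N`, and it maps extreme points
onto extreme points. In the ball, `0` is the midpoint of `±δ_x`, a nonzero point of total variation
`< 1` lies strictly between `0` and its normalization, and a point whose variation charges both `A`
and `Aᶜ` is a proper convex combination of its normalized restrictions to `A` and `Aᶜ`. Hence the
variation of an extreme point is a zero-one probability measure, i.e. a Dirac mass, as the open set
`Ω` is a standard Borel space. Conversely, `±δ_x` is extreme because `±1` is extreme in `[-1, 1]`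
and a measure of the ball with mass `±1` at `x` has no mass elsewhere.
-/

open Set MeasureTheory

theorem LinearMap.image_extremePoints_of_injective {𝕜 E F : Type*} [Ring 𝕜] [PartialOrder 𝕜]
    [IsOrderedRing 𝕜] [AddCommGroup E] [Module 𝕜 E] [AddCommGroup F] [Module 𝕜 F]
    (f : E →ₗ[𝕜] F) (hf : Function.Injective f) (s : Set E) :
    f '' extremePoints 𝕜 s = extremePoints 𝕜 (f '' s) := by
  have himage : ∀ x y, f '' openSegment 𝕜 x y = openSegment 𝕜 (f x) (f y) :=
    image_openSegment _ f.toAffineMap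
  ext b
  constructor
  · rintro ⟨a, ⟨ha, hext⟩, rfl⟩
    refine ⟨mem_image_of_mem f ha, ?_⟩
    rintro _ ⟨a₁, h₁, rfl⟩ _ ⟨a₂, h₂, rfl⟩ hseg
    rw [← himage, hf.mem_set_image] at hseg
    rw [hext h₁ h₂ hseg]
  · rintro ⟨⟨a, ha, rfl⟩, hext⟩
    refine ⟨a, ⟨ha, fun a₁ h₁ a₂ h₂ hseg => hf ?_⟩, rfl⟩
    exact hext (mem_image_of_mem f h₁) (mem_image_of_mem f h₂)
      (himage a₁ a₂ ▸ mem_image_of_mem f hseg)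

namespace LinearMap

variable {R M X Y : Type*} [Ring R] [AddCommGroup M] [Module R M] [AddCommGroup X] [Module R X]
  [AddCommGroup Y] [Module R Y] {L : X →ₗ[R] Y} {T : M →ₗ[R] X} {j : M →ₗ[R] Y}

theorem injective_ker_mkQ_comp (hT : ∀ m, L (T m) = j m) (hj : Function.Injective j) :
    Function.Injective ((ker L).mkQ ∘ₗ T) := by
  intro m₁ m₂ h
  rw [comp_apply, comp_apply, Submodule.mkQ_apply, Submodule.mkQ_apply, Submodule.Quotient.eq,
    mem_ker, map_sub, sub_eq_zero, hT, hT] at h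
  exact hj h

theorem image_ker_mkQ_eq_image_mkQ_comp (hT : ∀ m, L (T m) = j m) (S : Set M) :
    (ker L).mkQ '' {u | ∃ m, L u = j m ∧ m ∈ S} = ((ker L).mkQ ∘ₗ T) '' S := by
  ext v
  constructor
  · rintro ⟨u, ⟨m, hu, hm⟩, rfl⟩
    refine ⟨m, hm, ?_⟩
    rw [comp_apply, Submodule.mkQ_apply, Submodule.mkQ_apply, Submodule.Quotient.eq, mem_ker,
      map_sub, hT, hu, sub_self]
  · rintro ⟨m, hm, rfl⟩
    exact ⟨T m, ⟨m, hT m, hm⟩, rfl⟩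

end LinearMap

namespace MeasureTheory

lemma Measure.totalVariation_toSignedMeasure {α : Type*} [MeasurableSpace α] (m : Measure α)
    [IsFiniteMeasure m] : m.toSignedMeasure.totalVariation = m := by
  rw [SignedMeasure.totalVariation_eq_variation, Measure.variation_toSignedMeasure]

namespace SignedMeasure

variable {α : Type*} [MeasurableSpace α]

lemma totalVariation_smul (c : ℝ) (μ : SignedMeasure α) :
    (c • μ).totalVariation = ‖c‖₊ • μ.totalVariation := by
  simp only [totalVariation_eq_variation, VectorMeasure.variation_smul]

lemma totalVariation_restrict (μ : SignedMeasure α) {A : Set α} (hA : MeasurableSet A) :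
    totalVariation (μ.restrict A) = μ.totalVariation.restrict A := by
  simp only [totalVariation_eq_variation, VectorMeasure.variation_restrict hA]

lemma totalVariation_real_smul (c : ℝ) (μ : SignedMeasure α) (A : Set α) :
    (c • μ).totalVariation.real A = |c| * μ.totalVariation.real A := by
  simp [totalVariation_smul, measureReal_def]

lemma totalVariation_eq_zero_iff {μ : SignedMeasure α} : μ.totalVariation = 0 ↔ μ = 0 := by
  rw [totalVariation_eq_variation, VectorMeasure.variation_eq_zero]

variable (α) in
def totalVariationUnitBall : Set (SignedMeasure α) := {μ | μ.totalVariation univ ≤ 1}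

lemma mem_totalVariationUnitBall {μ : SignedMeasure α} :
    μ ∈ totalVariationUnitBall α ↔ μ.totalVariation univ ≤ 1 := Iff.rfl

lemma mem_totalVariationUnitBall_iff_real {μ : SignedMeasure α} :
    μ ∈ totalVariationUnitBall α ↔ μ.totalVariation.real univ ≤ 1 := by
  rw [totalVariationUnitBall, mem_ofPred_eq, measureReal_def, ← ENNReal.toReal_one,
    ENNReal.toReal_le_toReal (measure_ne_top _ _) ENNReal.one_ne_top]

lemma zero_mem_totalVariationUnitBall : (0 : SignedMeasure α) ∈ totalVariationUnitBall α := by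
  simp [totalVariationUnitBall, totalVariation_zero]

lemma abs_apply_le_one_of_mem_totalVariationUnitBall {μ : SignedMeasure α}
    (hμ : μ ∈ totalVariationUnitBall α) (A : Set α) : |μ A| ≤ 1 :=
  calc |μ A| ≤ μ.totalVariation.real A := norm_le_totalVariation μ A
    _ ≤ μ.totalVariation.real univ := measureReal_mono (subset_univ A)
    _ ≤ 1 := mem_totalVariationUnitBall_iff_real.1 hμ

lemma inv_smul_restrict_mem_totalVariationUnitBall (μ : SignedMeasure α) {A : Set α}
    (hA : MeasurableSet A) :
    (μ.totalVariation.real A)⁻¹ • μ.restrict A ∈ totalVariationUnitBall α := by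
  rw [mem_totalVariationUnitBall_iff_real, totalVariation_real_smul, totalVariation_restrict μ hA,
    measureReal_restrict_apply_univ, abs_inv, abs_of_nonneg measureReal_nonneg]
  exact inv_mul_le_one_of_le₀ le_rfl measureReal_nonneg

lemma smul_dirac_mem_totalVariationUnitBall (x : α) {σ : ℝ} (hσ : |σ| = 1) :
    σ • (Measure.dirac x).toSignedMeasure ∈ totalVariationUnitBall α := by
  simp [mem_totalVariationUnitBall_iff_real, totalVariation_real_smul,
    Measure.totalVariation_toSignedMeasure, hσ]

lemma eq_smul_dirac_of_totalVariation_compl_eq_zero [MeasurableSingletonClass α]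
    (μ : SignedMeasure α) {x : α} (h : μ.totalVariation {x}ᶜ = 0) :
    μ = μ {x} • (Measure.dirac x).toSignedMeasure := by
  ext B hB
  have hnull : μ (B \ {x}) = 0 :=
    null_of_totalVariation_zero μ (measure_mono_null (sdiff_subset_compl B {x}) h)
  have hsplit : μ B = μ (B ∩ {x}) := by
    rw [← VectorMeasure.of_add_of_sdiff (hB.inter (measurableSet_singleton x)) hB
      inter_subset_left, sdiff_self_inter, hnull, add_zero]
  by_cases hxB : x ∈ B <;> simp [hsplit, hxB, hB, measureReal_def]

lemma eq_smul_dirac_of_abs_apply_singleton_eq_one [MeasurableSingletonClass α]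
    {μ : SignedMeasure α} (hμ : μ ∈ totalVariationUnitBall α) {x : α} (hx : |μ {x}| = 1) :
    μ = μ {x} • (Measure.dirac x).toSignedMeasure := by
  refine eq_smul_dirac_of_totalVariation_compl_eq_zero μ ?_
  have hsingleton : 1 ≤ μ.totalVariation.real {x} := hx ▸ norm_le_totalVariation μ {x}
  have hsum := measureReal_add_measureReal_compl (μ := μ.totalVariation)
    (measurableSet_singleton x)
  have hcompl : μ.totalVariation.real {x}ᶜ = 0 := by
    linarith [mem_totalVariationUnitBall_iff_real.1 hμ,
      measureReal_nonneg (μ := μ.totalVariation) (s := {x}ᶜ)]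
  exact (measureReal_eq_zero_iff (measure_ne_top _ _)).1 hcompl

theorem smul_dirac_mem_extremePoints [MeasurableSingletonClass α] (x : α) {σ : ℝ}
    (hσ : σ = 1 ∨ σ = -1) :
    σ • (Measure.dirac x).toSignedMeasure ∈ extremePoints ℝ (totalVariationUnitBall α) := by
  have habs : |σ| = 1 := by rcases hσ with rfl | rfl <;> norm_num
  have hσ_extreme : σ ∈ extremePoints ℝ (Icc (-1) 1) := by
    rw [extremePoints_Icc (by norm_num)]; rcases hσ with rfl | rfl <;> simp
  refine ⟨smul_dirac_mem_totalVariationUnitBall x habs, ?_⟩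
  rintro μ₁ hμ₁ μ₂ hμ₂ ⟨a, b, ha, hb, hab, hμ⟩
  have hvalue : a * μ₁ {x} + b * μ₂ {x} = σ := by
    simpa [measureReal_def] using congr_arg (· {x}) hμ
  have h₁ : μ₁ {x} = σ := hσ_extreme.2
    (abs_le.1 (abs_apply_le_one_of_mem_totalVariationUnitBall hμ₁ {x}))
    (abs_le.1 (abs_apply_le_one_of_mem_totalVariationUnitBall hμ₂ {x}))
    ⟨a, b, ha, hb, hab, hvalue⟩
  rw [eq_smul_dirac_of_abs_apply_singleton_eq_one hμ₁ (h₁ ▸ habs), h₁]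

theorem totalVariation_univ_eq_one_of_mem_extremePoints [Nonempty α]
    {μ : SignedMeasure α} (hμ : μ ∈ extremePoints ℝ (totalVariationUnitBall α)) :
    μ.totalVariation univ = 1 := by
  have hne : μ ≠ 0 := by
    rintro rfl
    obtain ⟨x⟩ := ‹Nonempty α›
    have hδ : (1 : ℝ) • (Measure.dirac x).toSignedMeasure = 0 :=
      hμ.2 (smul_dirac_mem_totalVariationUnitBall x abs_one)
        (smul_dirac_mem_totalVariationUnitBall x (by norm_num : |(-1 : ℝ)| = 1))
        ⟨1 / 2, 1 / 2, by norm_num, by norm_num, by norm_num, by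
          rw [smul_smul, smul_smul, ← add_smul]; norm_num⟩
    simpa [measureReal_def] using congr_arg (· univ) hδ
  set r := μ.totalVariation.real univ with hr_def
  have hr : 0 < r := ENNReal.toReal_pos
    (by rwa [Ne, Measure.measure_univ_eq_zero, totalVariation_eq_zero_iff]) (measure_ne_top _ _)
  rw [← ENNReal.toReal_eq_one_iff, ← measureReal_def, ← hr_def]
  by_contra hr1
  have hr1 : r < 1 := lt_of_le_of_ne (mem_totalVariationUnitBall_iff_real.1 hμ.1) hr1
  refine hne (hμ.2 zero_mem_totalVariationUnitBall
    (inv_smul_restrict_mem_totalVariationUnitBall μ MeasurableSet.univ)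
    ⟨1 - r, r, by linarith, hr, by ring, ?_⟩).symm
  rw [smul_zero, zero_add, smul_smul, mul_inv_cancel₀ hr.ne', one_smul,
    VectorMeasure.restrict_univ]

theorem isZeroOneMeasure_totalVariation_of_mem_extremePoints [Nonempty α]
    {μ : SignedMeasure α} (hμ : μ ∈ extremePoints ℝ (totalVariationUnitBall α)) :
    IsZeroOneMeasure μ.totalVariation := by
  have huniv := totalVariation_univ_eq_one_of_mem_extremePoints hμ
  refine ⟨fun A hA => ?_⟩
  by_contra! hA01
  set t := μ.totalVariation.real A with ht_def
  have ht0 : 0 < t := ENNReal.toReal_pos hA01.1 (measure_ne_top _ _)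
  have ht1 : t < 1 := by
    refine lt_of_le_of_ne ?_ ?_
    · exact (measureReal_mono (subset_univ A)).trans (mem_totalVariationUnitBall_iff_real.1 hμ.1)
    · rw [Ne, ht_def, measureReal_def, ENNReal.toReal_eq_one_iff]
      exact hA01.2
  have hcompl : μ.totalVariation.real Aᶜ = 1 - t := by
    rw [measureReal_compl hA, measureReal_def μ.totalVariation univ, huniv, ENNReal.toReal_one]
  have hrestrict : t⁻¹ • μ.restrict A = μ := hμ.2
    (inv_smul_restrict_mem_totalVariationUnitBall μ hA)
    (inv_smul_restrict_mem_totalVariationUnitBall μ hA.compl)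
    ⟨t, 1 - t, ht0, by linarith, by ring, by
      rw [hcompl, smul_smul, smul_smul, mul_inv_cancel₀ ht0.ne', mul_inv_cancel₀ (by linarith),
        one_smul, one_smul, VectorMeasure.restrict_add_restrict_compl hA]⟩
  have : μ.totalVariation.real Aᶜ = 0 := by
    rw [← hrestrict, totalVariation_real_smul, totalVariation_restrict μ hA,
      measureReal_restrict_apply hA.compl, compl_inter_self, measureReal_empty, mul_zero]
  linarith

theorem exists_eq_smul_dirac_of_mem_extremePoints [StandardBorelSpace α] [Nonempty α]
    {μ : SignedMeasure α} (hμ : μ ∈ extremePoints ℝ (totalVariationUnitBall α)) :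
    ∃ (x : α) (σ : ℝ), (σ = 1 ∨ σ = -1) ∧ μ = σ • (Measure.dirac x).toSignedMeasure := by
  have huniv := totalVariation_univ_eq_one_of_mem_extremePoints hμ
  have := isZeroOneMeasure_totalVariation_of_mem_extremePoints hμ
  have : NeZero μ.totalVariation := ⟨fun h => by simp [h] at huniv⟩
  obtain ⟨x, hx⟩ := IsZeroOneMeasure.exists_eq_dirac (μ := μ.totalVariation)
  have hμx := eq_smul_dirac_of_totalVariation_compl_eq_zero μ (x := x) (by simp [hx])
  refine ⟨x, μ {x}, (abs_eq zero_le_one).1 ?_, hμx⟩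
  have h := congr_arg (·.totalVariation.real univ) hμx
  simp only [totalVariation_real_smul, Measure.totalVariation_toSignedMeasure] at h
  simpa [measureReal_def, huniv] using h.symm

theorem extremePoints_totalVariationUnitBall [StandardBorelSpace α] [Nonempty α] :
    extremePoints ℝ (totalVariationUnitBall α) =
      {μ | ∃ (x : α) (σ : ℝ), (σ = 1 ∨ σ = -1) ∧ μ = σ • (Measure.dirac x).toSignedMeasure} := by
  ext μ
  refine ⟨exists_eq_smul_dirac_of_mem_extremePoints, ?_⟩
  rintro ⟨x, σ, hσ, rfl⟩
  exact smul_dirac_mem_extremePoints x hσ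

end SignedMeasure
end MeasureTheory

theorem extremePoints_ball_diffop_general
    {d : ℕ} (Ω : Set (EuclideanSpace ℝ (Fin d)))
    (hΩo : IsOpen Ω) (hΩne : Ω.Nonempty)
    {X Y : Type*} [AddCommGroup X] [Module ℝ X] [AddCommGroup Y] [Module ℝ Y]
    (L : X →ₗ[ℝ] Y)
    (j : SignedMeasure Ω →ₗ[ℝ] Y) (hj : Function.Injective j)
    (T : SignedMeasure Ω →ₗ[ℝ] X) (hT : ∀ μ : SignedMeasure Ω, L (T μ) = j μ)
    (N : Submodule ℝ X) (hN : N = LinearMap.ker L) :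
    Function.Injective (N.mkQ ∘ₗ T) ∧
      Set.extremePoints ℝ (N.mkQ ''
          {u : X | ∃ μ : SignedMeasure Ω, L u = j μ ∧ μ.totalVariation Set.univ ≤ 1}) =
        (N.mkQ ∘ₗ T) '' {μ : SignedMeasure Ω | ∃ (x : Ω) (σ : ℝ), (σ = 1 ∨ σ = -1) ∧
          μ = σ • (MeasureTheory.Measure.dirac x).toSignedMeasure} := by
  subst hN
  have : Nonempty Ω := hΩne.to_subtype
  have : StandardBorelSpace Ω := hΩo.measurableSet.standardBorel
  have hinj := LinearMap.injective_ker_mkQ_comp hT hj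
  refine ⟨hinj, ?_⟩
  simp only [← SignedMeasure.mem_totalVariationUnitBall]
  rw [LinearMap.image_ker_mkQ_eq_image_mkQ_comp hT,
    ← LinearMap.image_extremePoints_of_injective _ hinj,
    SignedMeasure.extremePoints_totalVariationUnitBall]

/-- Abstract setting of Theorem 4.9: `X` stands for `C₀^s(Ω)*`, `Y` for the
distributions receiving `L u`, `j` is the (injective) embedding of the finite signed Radon
measures `M(Ω)` into `Y`, and `T : M(Ω) → X` (standing for `μ ↦ (μ̃ ⋆ G)|_Ω`) satisfies
`L(Tμ) = μ`.  With `N = ker L` and `π_N` the quotient map, `π_N ∘ T` is injective and the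
extreme points of the unit ball `B_N = π_N {u : ‖Lu‖_M ≤ 1}` of the seminorm `‖L·‖_M` in
`X/N` are exactly the classes `(π_N ∘ T)(±δ_x) = ±G_x + N`, `x ∈ Ω`. -/
theorem extremePoints_ball_diffop
    {d : ℕ} (Ω : Set (EuclideanSpace ℝ (Fin d)))
    (hΩo : IsOpen Ω) (hΩne : Ω.Nonempty) (hΩb : Bornology.IsBounded Ω)
    {X Y : Type*} [AddCommGroup X] [Module ℝ X] [AddCommGroup Y] [Module ℝ Y]
    (L : X →ₗ[ℝ] Y)
    (j : SignedMeasure Ω →ₗ[ℝ] Y) (hj : Function.Injective j)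
    (T : SignedMeasure Ω →ₗ[ℝ] X) (hT : ∀ μ : SignedMeasure Ω, L (T μ) = j μ)
    (N : Submodule ℝ X) (hN : N = LinearMap.ker L) :
    Function.Injective (N.mkQ ∘ₗ T) ∧
      Set.extremePoints ℝ (N.mkQ ''
          {u : X | ∃ μ : SignedMeasure Ω, L u = j μ ∧ μ.totalVariation Set.univ ≤ 1}) =
        (N.mkQ ∘ₗ T) '' {μ : SignedMeasure Ω | ∃ (x : Ω) (σ : ℝ), (σ = 1 ∨ σ = -1) ∧
          μ = σ • (MeasureTheory.Measure.dirac x).toSignedMeasure} :=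
  extremePoints_ball_diffop_general Ω hΩo hΩne L j hj T hT N hN
end
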